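/- For each closed conditional expression t over a finite set A of atoms, there exists a mem-basic form t' over A with CP_mem ⊢ t = t', where a mem-basic form over A' ⊆ A is T, F, or t1 ◁ a ▷ t2 with a ∈ A' and t1, t2 mem-basic forms over A' \ {a}. -/

import Mathlib

inductive CE (A : Type) : Type
  | tt : CE A
  | ff : CE A
  | atom : A → CE A
  | cond : CE A → CE A → CE A → CE A

inductive Deriv {A : Type} (Ax : CE A → CE A → Prop) : CE A → CE A → Prop
  | ax {t t'} : Ax t t' → Deriv Ax t t'
  | refl (t) : Deriv Ax t t
  | symm {t t'} : Deriv Ax t t' → Deriv Ax t' t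
  | trans {t t' t''} : Deriv Ax t t' → Deriv Ax t' t'' → Deriv Ax t t''
  | congr {x x' y y' z z'} : Deriv Ax x x' → Deriv Ax y y' → Deriv Ax z z' →
      Deriv Ax (.cond x y z) (.cond x' y' z')
  | cp1 (x y) : Deriv Ax (.cond x .tt y) x
  | cp2 (x y) : Deriv Ax (.cond x .ff y) y
  | cp3 (x) : Deriv Ax (.cond .tt x .ff) x
  | cp4 (x y z u v) : Deriv Ax (.cond x (.cond y z u) v) (.cond (.cond x y v) z (.cond x u v))

/-- Derivability from the CP axioms alone (no extra axioms). -/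
def CP {A : Type} : CE A → CE A → Prop := Deriv (fun _ _ => False)

/-- The axiom (CPmem): x ◁ y ▷ (z ◁ u ▷ (v ◁ y ▷ w)) = x ◁ y ▷ (z ◁ u ▷ w). -/
def AxMem {A : Type} : CE A → CE A → Prop := fun s t =>
  ∃ x y z u v w : CE A,
    s = .cond x y (.cond z u (.cond v y w)) ∧ t = .cond x y (.cond z u w)

/-- mem-basic forms over a finite set A' of atoms. -/
inductive MemBasic {A : Type} [DecidableEq A] : Finset A → CE A → Prop
  | tt (A' : Finset A) : MemBasic A' .tt
  | ff (A' : Finset A) : MemBasic A' .ff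
  | cond {A' : Finset A} {t1 t2 : CE A} {a : A} : a ∈ A' →
      MemBasic (A'.erase a) t1 → MemBasic (A'.erase a) t2 →
      MemBasic A' (.cond t1 (.atom a) t2)

/-!
Every conditional expression is CP-equal to a decision tree over atoms (compose the
decision trees of the three parts by the distributive law `cp4`). Under `CPmem`, inside the
`F`-branch of `x ◁ a ▷ _` every later test of `a` may be resolved to its `F`-branch, and
dually (after negating `a` by `y ◁ a ▷ x = x ◁ (F ◁ a ▷ T) ▷ y`) inside the `T`-branch.
Resolving the root atom throughout both subtrees leaves trees without that atom, so
induction on the set of atoms still available produces a mem-basic form.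
-/

notation:60 x:61 " ◁ " y:61 " ▷ " z:61 => CE.cond x y z

notation:50 s:51 " =ₘ " t:51 => Deriv AxMem s t

namespace CE

variable {A : Type}

inductive IsBasic (S : Set A) : CE A → Prop
  | tt : IsBasic S .tt
  | ff : IsBasic S .ff
  | cond {t₁ t₂ : CE A} {a : A} : a ∈ S → IsBasic S t₁ → IsBasic S t₂ →
      IsBasic S (t₁ ◁ .atom a ▷ t₂)

/-- `x ◁ guard a s ▷ y` takes its branch `y` exactly when `a` has the value `s`. -/
def guard (a : A) : Bool → CE A
  | false => .atom a
  | true => .ff ◁ .atom a ▷ .tt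

variable [DecidableEq A]

def setAtom (a : A) (s : Bool) : CE A → CE A
  | t₁ ◁ .atom b ▷ t₂ =>
      if b = a then (if s then setAtom a s t₁ else setAtom a s t₂)
      else setAtom a s t₁ ◁ .atom b ▷ setAtom a s t₂
  | t => t

@[simp]
theorem setAtom_cond_atom_self (a : A) (s : Bool) (t₁ t₂ : CE A) :
    (t₁ ◁ .atom a ▷ t₂).setAtom a s = if s then t₁.setAtom a s else t₂.setAtom a s := by
  simp [setAtom]

@[simp]
theorem setAtom_cond_atom_of_ne {a b : A} (h : b ≠ a) (s : Bool) (t₁ t₂ : CE A) :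
    (t₁ ◁ .atom b ▷ t₂).setAtom a s = t₁.setAtom a s ◁ .atom b ▷ t₂.setAtom a s := by
  simp [setAtom, h]

theorem IsBasic.setAtom {S : Set A} {t : CE A} (h : IsBasic S t) (a : A) (s : Bool) :
    IsBasic (S \ {a}) (t.setAtom a s) := by
  induction h with
  | tt => exact .tt
  | ff => exact .ff
  | @cond t₁ t₂ b hb _ _ ih₁ ih₂ =>
    by_cases hba : b = a
    · subst hba
      cases s
      · simpa using ih₂
      · simpa using ih₁
    · rw [setAtom_cond_atom_of_ne hba]
      exact .cond ⟨hb, hba⟩ ih₁ ih₂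

end CE

instance {A : Type} {Ax : CE A → CE A → Prop} : Trans (Deriv Ax) (Deriv Ax) (Deriv Ax) :=
  ⟨Deriv.trans⟩

namespace Deriv

open CE

variable {A : Type}

section CP

variable {Ax : CE A → CE A → Prop}

theorem cond_congr_right {x y z z' : CE A} (h : Deriv Ax z z') :
    Deriv Ax (x ◁ y ▷ z) (x ◁ y ▷ z') :=
  .congr (.refl x) (.refl y) h

theorem cond_not (x y c : CE A) : Deriv Ax (x ◁ (.ff ◁ c ▷ .tt) ▷ y) (y ◁ c ▷ x) :=
  .trans (.cp4 x .ff c .tt y) (.congr (.cp2 x y) (.refl c) (.cp1 x y))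

theorem exists_isBasic_cond {S : Set A} {c : CE A} (hc : IsBasic S c) {u v : CE A}
    (hu : IsBasic S u) (hv : IsBasic S v) : ∃ w, IsBasic S w ∧ Deriv Ax (u ◁ c ▷ v) w := by
  induction hc with
  | tt => exact ⟨u, hu, .cp1 u v⟩
  | ff => exact ⟨v, hv, .cp2 u v⟩
  | @cond c₁ c₂ a ha _ _ ih₁ ih₂ =>
    obtain ⟨w₁, hw₁, d₁⟩ := ih₁
    obtain ⟨w₂, hw₂, d₂⟩ := ih₂
    exact ⟨w₁ ◁ .atom a ▷ w₂, .cond ha hw₁ hw₂,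
      .trans (.cp4 u c₁ (.atom a) c₂ v) (.congr d₁ (.refl _) d₂)⟩

theorem exists_isBasic (t : CE A) : ∃ b, IsBasic Set.univ b ∧ Deriv Ax t b := by
  induction t with
  | tt => exact ⟨.tt, .tt, .refl _⟩
  | ff => exact ⟨.ff, .ff, .refl _⟩
  | atom a => exact ⟨.tt ◁ .atom a ▷ .ff, .cond trivial .tt .ff, .symm (.cp3 _)⟩
  | cond t₁ t₂ t₃ ih₁ ih₂ ih₃ =>
    obtain ⟨b₁, hb₁, d₁⟩ := ih₁
    obtain ⟨b₂, hb₂, d₂⟩ := ih₂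
    obtain ⟨b₃, hb₃, d₃⟩ := ih₃
    obtain ⟨w, hw, dw⟩ := exists_isBasic_cond hb₂ hb₁ hb₃
    exact ⟨w, hw, .trans (.congr d₁ d₂ d₃) dw⟩

end CP

theorem axMem (x y z u v w : CE A) : x ◁ y ▷ (z ◁ u ▷ (v ◁ y ▷ w)) =ₘ x ◁ y ▷ (z ◁ u ▷ w) :=
  .ax ⟨x, y, z, u, v, w, rfl, rfl⟩

theorem axMem_absorb (x y v w : CE A) : x ◁ y ▷ (v ◁ y ▷ w) =ₘ x ◁ y ▷ w :=
  calc x ◁ y ▷ (v ◁ y ▷ w)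
    _ =ₘ x ◁ y ▷ (.tt ◁ .ff ▷ (v ◁ y ▷ w)) := cond_congr_right (.symm (.cp2 _ _))
    _ =ₘ x ◁ y ▷ (.tt ◁ .ff ▷ w) := axMem x y .tt .ff v w
    _ =ₘ x ◁ y ▷ w := cond_congr_right (.cp2 _ _)

theorem axMem_lift {x y t t' : CE A} (h : x ◁ y ▷ t =ₘ x ◁ y ▷ t') (z u : CE A) :
    x ◁ y ▷ (z ◁ u ▷ t) =ₘ x ◁ y ▷ (z ◁ u ▷ t') :=
  calc x ◁ y ▷ (z ◁ u ▷ t)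
    _ =ₘ x ◁ y ▷ (z ◁ u ▷ (x ◁ y ▷ t)) := .symm (axMem x y z u x t)
    _ =ₘ x ◁ y ▷ (z ◁ u ▷ (x ◁ y ▷ t')) := cond_congr_right (cond_congr_right h)
    _ =ₘ x ◁ y ▷ (z ◁ u ▷ t') := axMem x y z u x t'

variable [DecidableEq A]

theorem cond_guard_setAtom (a : A) (s : Bool) (x t : CE A) :
    x ◁ guard a s ▷ t =ₘ x ◁ guard a s ▷ t.setAtom a s := by
  induction t generalizing x with
  | cond t₁ c t₂ ih₁ _ ih₂ =>
    cases c with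
    | atom b =>
      by_cases hba : b = a
      · subst hba
        rw [setAtom_cond_atom_self]
        cases s
        · exact (axMem_absorb x (.atom b) t₁ t₂).trans (ih₂ x)
        · calc x ◁ guard b true ▷ (t₁ ◁ .atom b ▷ t₂)
            _ =ₘ x ◁ guard b true ▷ (t₂ ◁ guard b true ▷ t₁) :=
              cond_congr_right (.symm (cond_not _ _ _))
            _ =ₘ x ◁ guard b true ▷ t₁ := axMem_absorb _ _ _ _
            _ =ₘ x ◁ guard b true ▷ t₁.setAtom b true := ih₁ x
      · rw [setAtom_cond_atom_of_ne hba]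
        calc x ◁ guard a s ▷ (t₁ ◁ .atom b ▷ t₂)
          _ =ₘ x ◁ guard a s ▷ (t₁ ◁ .atom b ▷ t₂.setAtom a s) := axMem_lift (ih₂ x) _ _
          _ =ₘ x ◁ guard a s ▷ (t₂.setAtom a s ◁ (.ff ◁ .atom b ▷ .tt) ▷ t₁) :=
            cond_congr_right (.symm (cond_not _ _ _))
          _ =ₘ x ◁ guard a s ▷ (t₂.setAtom a s ◁ (.ff ◁ .atom b ▷ .tt) ▷ t₁.setAtom a s) :=
            axMem_lift (ih₁ x) _ _
          _ =ₘ x ◁ guard a s ▷ (t₁.setAtom a s ◁ .atom b ▷ t₂.setAtom a s) :=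
            cond_congr_right (cond_not _ _ _)
    | _ => exact .refl _
  | _ => exact .refl _

theorem cond_atom_setAtom (b : A) (t₁ t₂ : CE A) :
    t₁ ◁ .atom b ▷ t₂ =ₘ t₁.setAtom b true ◁ .atom b ▷ t₂.setAtom b false :=
  calc t₁ ◁ .atom b ▷ t₂
    _ =ₘ t₂ ◁ guard b true ▷ t₁ := .symm (cond_not _ _ _)
    _ =ₘ t₂ ◁ guard b true ▷ t₁.setAtom b true := cond_guard_setAtom _ _ _ _
    _ =ₘ t₁.setAtom b true ◁ guard b false ▷ t₂ := cond_not _ _ _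
    _ =ₘ t₁.setAtom b true ◁ .atom b ▷ t₂.setAtom b false := cond_guard_setAtom _ _ _ _

end Deriv

theorem CE.IsBasic.exists_memBasic {A : Type} [DecidableEq A] (A' : Finset A) {t : CE A}
    (h : IsBasic ↑A' t) : ∃ t', MemBasic A' t' ∧ t =ₘ t' := by
  induction A' using Finset.strongInduction generalizing t with
  | H A' ih =>
    cases h with
    | tt => exact ⟨.tt, .tt A', .refl _⟩
    | ff => exact ⟨.ff, .ff A', .refl _⟩
    | @cond t₁ t₂ b hb h₁ h₂ =>
      have reduce (t : CE A) (ht : IsBasic ↑A' t) (s : Bool) :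
          ∃ t', MemBasic (A'.erase b) t' ∧ t.setAtom b s =ₘ t' :=
        ih _ (Finset.erase_ssubset hb) (by simpa [Finset.coe_erase] using ht.setAtom b s)
      obtain ⟨t₁', m₁, d₁⟩ := reduce t₁ h₁ true
      obtain ⟨t₂', m₂, d₂⟩ := reduce t₂ h₂ false
      exact ⟨t₁' ◁ .atom b ▷ t₂', .cond hb m₁ m₂,
        (Deriv.cond_atom_setAtom b t₁ t₂).trans (.congr d₁ (.refl _) d₂)⟩

theorem exists_mem_basic_form (A : Type) [Fintype A] [DecidableEq A] (t : CE A) :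
    ∃ t' : CE A, MemBasic Finset.univ t' ∧ Deriv AxMem t t' := by
  obtain ⟨b, hb, d⟩ := Deriv.exists_isBasic (Ax := AxMem) t
  obtain ⟨t', m, d'⟩ := CE.IsBasic.exists_memBasic Finset.univ (by simpa using hb)
  exact ⟨t', m, d.trans d'⟩
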